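/- arXiv:1711.00123 — 3 statements merged into one kernel-verified Lean document; each statement's English description precedes it below -/
import Mathlib

section
/- Gumbel-argmax correctness: if u_i ∼ Uniform(0,1) independently and z_i = log θ_i − log(−log u_i), then P(argmax_i z_i = k) = θ_k. -/
open MeasureTheory ProbabilityTheory Set

/-!
Write `u = u k`. For `u i, u ∈ (0,1)` one has `z i < z k` iff `u i < u ^ (θ i / θ k)`, so given
`u = t` the event `argmax z = k` says that each other `u i` falls in `(0, t ^ (θ i / θ k))`. By
independence this has conditional probability `∏_{i ≠ k} t ^ (θ i / θ k) = t ^ (1 / θ k - 1)`,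
and `∫₀¹ t ^ (1 / θ k - 1) dt = θ k`.
-/

lemma log_sub_log_neg_log_lt_iff {a b x y : ℝ} (ha : 0 < a) (hb : 0 < b)
    (hx : x ∈ Ioo (0 : ℝ) 1) (hy : y ∈ Ioo (0 : ℝ) 1) :
    Real.log a - Real.log (-Real.log x) < Real.log b - Real.log (-Real.log y) ↔
      x < y ^ (a / b) := by
  have hlx : 0 < -Real.log x := neg_pos.2 (Real.log_neg hx.1 hx.2)
  have hly : 0 < -Real.log y := neg_pos.2 (Real.log_neg hy.1 hy.2)
  rw [← Real.log_div ha.ne' hlx.ne', ← Real.log_div hb.ne' hly.ne',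
    Real.log_lt_log_iff (div_pos ha hlx) (div_pos hb hly), div_lt_div_iff₀ hlx hly,
    ← Real.log_lt_log_iff hx.1 (Real.rpow_pos_of_pos hy.1 _), Real.log_rpow hy.1,
    div_mul_eq_mul_div, lt_div_iff₀ hb]
  constructor <;> intro h <;> linarith

lemma ae_mem_of_map_eq_restrict {Ω α : Type*} [MeasurableSpace Ω] [MeasurableSpace α]
    {P : Measure Ω} {ν : Measure α} {X : Ω → α} {s : Set α} (hX : AEMeasurable X P)
    (hs : MeasurableSet s) (h : P.map X = ν.restrict s) : ∀ᵐ ω ∂P, X ω ∈ s :=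
  ae_of_ae_map hX (h ▸ ae_restrict_mem hs)

lemma volume_restrict_Ioo_Iio {c : ℝ} (hc : c ≤ 1) :
    volume.restrict (Ioo (0 : ℝ) 1) (Iio c) = ENNReal.ofReal c := by
  rw [Measure.restrict_apply measurableSet_Iio, Iio_inter_Ioo, min_eq_left hc, Real.volume_Ioo,
    sub_zero]

lemma pi_volume_restrict_Ioo_pi_Iio_rpow {ι : Type*} [Fintype ι] {t : ℝ} (ht : t ∈ Ioo (0 : ℝ) 1)
    {a : ι → ℝ} (ha : ∀ i, 0 ≤ a i) :
    Measure.pi (fun _ : ι ↦ volume.restrict (Ioo (0 : ℝ) 1)) (univ.pi fun i ↦ Iio (t ^ a i)) =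
      ENNReal.ofReal (t ^ ∑ i, a i) := by
  rw [Measure.pi_pi, Real.rpow_sum_of_pos ht.1,
    ENNReal.ofReal_prod_of_nonneg fun i _ ↦ (Real.rpow_pos_of_pos ht.1 _).le]
  exact Finset.prod_congr rfl fun i _ ↦ volume_restrict_Ioo_Iio (Real.rpow_le_one ht.1.le ht.2.le (ha i))

lemma lintegral_Ioo_rpow {s : ℝ} (hs : -1 < s) :
    ∫⁻ t in Ioo (0 : ℝ) 1, ENNReal.ofReal (t ^ s) = ENNReal.ofReal (1 / (s + 1)) := by
  have hint : IntegrableOn (fun t : ℝ ↦ t ^ s) (Ioc 0 1) :=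
    (intervalIntegrable_iff_integrableOn_Ioc_of_le zero_le_one).1
      (intervalIntegral.intervalIntegrable_rpow' hs)
  rw [← ofReal_integral_eq_lintegral_ofReal (hint.mono_set Ioo_subset_Ioc_self)
      (ae_restrict_of_forall_mem measurableSet_Ioo fun t ht ↦ Real.rpow_nonneg ht.1.le _),
    integral_Ioc_eq_integral_Ioo.symm, ← intervalIntegral.integral_of_le zero_le_one,
    integral_rpow (Or.inl hs), Real.one_rpow, Real.zero_rpow (by linarith), sub_zero]

lemma measurableSet_ofPred_forall_ne_lt {ι : Type*} [Countable ι] (k : ι) {g : ι → ℝ → ℝ}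
    (hg : ∀ i, Measurable (g i)) : MeasurableSet {x : ι → ℝ | ∀ i ≠ k, x i < g i (x k)} := by
  simp only [ofPred_forall]
  exact .iInter fun i ↦ .iInter fun _ ↦
    measurableSet_lt (measurable_pi_apply i) ((hg i).comp (measurable_pi_apply k))

lemma pi_ofPred_forall_ne_lt {n : ℕ} (μ : Fin (n + 1) → Measure ℝ) [∀ i, SigmaFinite (μ i)]
    (k : Fin (n + 1)) {g : Fin (n + 1) → ℝ → ℝ} (hg : ∀ i, Measurable (g i)) :
    Measure.pi μ {x | ∀ i ≠ k, x i < g i (x k)} =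
      ∫⁻ t, Measure.pi (fun j ↦ μ (k.succAbove j))
        (univ.pi fun j ↦ Iio (g (k.succAbove j) t)) ∂μ k := by
  set T : Set (ℝ × (Fin n → ℝ)) := {p | ∀ j, p.2 j < g (k.succAbove j) p.1}
  have hT : MeasurableSet T := by
    simp only [T, ofPred_forall]
    exact .iInter fun j ↦
      measurableSet_lt (measurable_pi_apply j |>.comp measurable_snd) ((hg _).comp measurable_fst)
  have hpre : {x | ∀ i ≠ k, x i < g i (x k)} =
      MeasurableEquiv.piFinSuccAbove (fun _ ↦ ℝ) k ⁻¹' T := by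
    ext x
    change (∀ i ≠ k, _) ↔ ∀ j, x (k.succAbove j) < g _ (x k)
    exact ⟨fun h j ↦ h _ (k.succAbove_ne j), fun h i hi ↦
      (Fin.exists_succAbove_eq hi).elim fun j hj ↦ hj ▸ h j⟩
  rw [hpre, (measurePreserving_piFinSuccAbove μ k).measure_preimage hT.nullMeasurableSet,
    Measure.prod_apply hT]
  congr! with t
  ext y
  simp [T, mem_pi]

/-- Gumbel-argmax correctness: if `u i ∼ Uniform(0,1)` independently and
`z i = log θ i − log(−log (u i))`, then `P(argmax z = k) = θ k`. -/
theorem gumbel_argmax {Ω : Type*} [MeasurableSpace Ω]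
    (P : Measure Ω) [IsProbabilityMeasure P]
    {n : ℕ} (θ : Fin n → ℝ) (hθ : ∀ i, 0 < θ i) (hsum : ∑ i, θ i = 1)
    (u : Fin n → Ω → ℝ) (hu : ∀ i, Measurable (u i))
    (huni : ∀ i, Measure.map (u i) P = volume.restrict (Set.Ioo (0 : ℝ) 1))
    (hind : iIndepFun u P)
    (z : Fin n → Ω → ℝ)
    (hz : ∀ i ω, z i ω = Real.log (θ i) - Real.log (-Real.log (u i ω)))
    (k : Fin n) :
    P {ω | ∀ i, i ≠ k → z i ω < z k ω} = ENNReal.ofReal (θ k) := by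
  obtain ⟨m, rfl⟩ : ∃ m, n = m + 1 := Nat.exists_eq_succ_of_ne_zero k.pos.ne'
  have hg : ∀ i, Measurable fun t : ℝ ↦ t ^ (θ i / θ k) := fun i ↦ by fun_prop
  have hlaw : P.map (fun ω i ↦ u i ω) = Measure.pi fun _ ↦ volume.restrict (Ioo (0 : ℝ) 1) := by
    simp_rw [hind.map_fun_eq_pi_map fun i ↦ (hu i).aemeasurable, huni]
  have hunit : ∀ᵐ ω ∂P, ∀ i, u i ω ∈ Ioo (0 : ℝ) 1 := ae_all_iff.2 fun i ↦
    ae_mem_of_map_eq_restrict (hu i).aemeasurable measurableSet_Ioo (huni i)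
  have hevent : {ω | ∀ i, i ≠ k → z i ω < z k ω} =ᵐ[P]
      (fun ω i ↦ u i ω) ⁻¹' {x | ∀ i ≠ k, x i < x k ^ (θ i / θ k)} := by
    filter_upwards [hunit] with ω hω
    simp only [hz]
    exact propext <| forall₂_congr fun i _ ↦
      log_sub_log_neg_log_lt_iff (hθ i) (hθ k) (hω i) (hω k)
  have hexp : ∑ j, θ (k.succAbove j) / θ k = 1 / θ k - 1 := by
    rw [← Finset.sum_div, eq_sub_of_add_eq' ((Fin.sum_univ_succAbove θ k).symm.trans hsum),
      sub_div, div_self (hθ k).ne']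
  rw [measure_congr hevent, ← Measure.map_apply (measurable_pi_lambda _ hu)
      (measurableSet_ofPred_forall_ne_lt k hg), hlaw, pi_ofPred_forall_ne_lt _ k hg,
    setLIntegral_congr_fun measurableSet_Ioo fun t ht ↦
      pi_volume_restrict_Ioo_pi_Iio_rpow ht fun j ↦ (div_pos (hθ _) (hθ k)).le,
    hexp, lintegral_Ioo_rpow (by linarith [one_div_pos.2 (hθ k)]), sub_add_cancel, one_div_one_div]
end

section
/- Conditional reparameterization for Bernoulli, case b = 0: if v ∼ Uniform(0,1), v' = v·(1−θ), and z̃ = log(θ/(1−θ)) + log(v'/(1−v')), then z̃ has the conditional distribution of z given z ≤ 0, where z = log(θ/(1−θ)) + log(u/(1−u)) with u ∼ Uniform(0,1). Concretely, for all t ≤ 0, P(z̃ ≤ t) = P(z ≤ t)/(1−θ), and P(z̃ ≤ 0) = 1. -/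
/-!
Both variables are increasing functions of a uniform variable, so their distribution functions
are lengths of intervals. With `a = θ/(1-θ)`, on `(0,1)` the event `log a + log (x/(1-x)) ≤ t` is
`x ≤ eᵗ/(a + eᵗ)`, so `P(z ≤ t) = eᵗ/(a + eᵗ)` while `P(z̃ ≤ t) = eᵗ/((a + eᵗ)(1-θ))`; at `t = 0`
the threshold `1/(a + 1)` equals `1 - θ`, which gives the normalisation.
-/

open MeasureTheory ProbabilityTheory Set

lemma volume_Iic_inter_Ioo_zero_one {c : ℝ} (hc1 : c ≤ 1) :
    volume (Iic c ∩ Ioo 0 1) = ENNReal.ofReal c := by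
  apply le_antisymm
  · calc volume (Iic c ∩ Ioo 0 1) ≤ volume (Ioc 0 c) :=
          measure_mono fun x ⟨hxc, hx0, _⟩ => ⟨hx0, hxc⟩
      _ = ENNReal.ofReal c := by simp
  · calc ENNReal.ofReal c = volume (Ioo 0 c) := by simp
      _ ≤ volume (Iic c ∩ Ioo 0 1) :=
          measure_mono fun x ⟨hx0, hxc⟩ => ⟨hxc.le, hx0, hxc.trans_le hc1⟩

lemma measure_comp_le_eq_of_map_eq_uniform {Ω : Type*} [MeasurableSpace Ω] {P : Measure Ω}
    {f : Ω → ℝ} (hf : Measurable f) (hmap : P.map f = volume.restrict (Ioo 0 1))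
    {g : ℝ → ℝ} (hg : Measurable g) {t c : ℝ} (hc1 : c ≤ 1)
    (hgc : ∀ x ∈ Ioo (0 : ℝ) 1, g x ≤ t ↔ x ≤ c) :
    P {ω | g (f ω) ≤ t} = ENNReal.ofReal c := by
  have hS : MeasurableSet {x | g x ≤ t} := measurableSet_le hg measurable_const
  have hinter : {x | g x ≤ t} ∩ Ioo 0 1 = Iic c ∩ Ioo 0 1 := by
    ext x
    simp only [mem_inter_iff, mem_ofPred_eq, mem_Iic]
    exact ⟨fun ⟨h, hx⟩ => ⟨(hgc x hx).1 h, hx⟩, fun ⟨h, hx⟩ => ⟨(hgc x hx).2 h, hx⟩⟩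
  change P (f ⁻¹' {x | g x ≤ t}) = _
  rw [← Measure.map_apply hf hS, hmap, Measure.restrict_apply hS, hinter,
    volume_Iic_inter_Ioo_zero_one hc1]

lemma log_add_log_div_one_sub_le_iff {a x t : ℝ} (ha : 0 < a) (hx : x ∈ Ioo (0 : ℝ) 1) :
    Real.log a + Real.log (x / (1 - x)) ≤ t ↔ x ≤ Real.exp t / (a + Real.exp t) := by
  obtain ⟨hx0, hx1⟩ := hx
  have h1x : 0 < 1 - x := by linarith
  have hE := Real.exp_pos t
  rw [← Real.log_mul ha.ne' (div_pos hx0 h1x).ne', Real.log_le_iff_le_exp (by positivity),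
    mul_div_assoc', div_le_iff₀ h1x, le_div_iff₀ (by positivity)]
  constructor <;> intro h <;> nlinarith

lemma exp_div_odds_add_exp_le {θ t : ℝ} (hθ : θ ∈ Ioo (0 : ℝ) 1) (ht : t ≤ 0) :
    Real.exp t / (θ / (1 - θ) + Real.exp t) ≤ 1 - θ := by
  obtain ⟨hθ0, hθ1⟩ := hθ
  have h1θ : 0 < 1 - θ := by linarith
  have hE1 : Real.exp t ≤ 1 := Real.exp_le_one_iff.mpr ht
  rw [div_le_iff₀ (by positivity), mul_add, mul_div_cancel₀ _ h1θ.ne']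
  nlinarith

lemma one_div_odds_add_one {θ : ℝ} (hθ : θ < 1) : 1 / (θ / (1 - θ) + 1) = 1 - θ := by
  have h1θ : 1 - θ ≠ 0 := by linarith
  field_simp
  ring

theorem bernoulli_conditional_reparam_zero_general {Ω : Type*} [MeasurableSpace Ω]
    (P : Measure Ω)
    (θ : ℝ) (hθ : θ ∈ Set.Ioo (0 : ℝ) 1)
    (u v : Ω → ℝ) (hu : Measurable u) (hv : Measurable v)
    (huni : Measure.map u P = volume.restrict (Set.Ioo (0 : ℝ) 1))
    (hvni : Measure.map v P = volume.restrict (Set.Ioo (0 : ℝ) 1))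
    (z ztilde : Ω → ℝ)
    (hz : ∀ ω, z ω = Real.log (θ / (1 - θ)) + Real.log (u ω / (1 - u ω)))
    (hzt : ∀ ω, ztilde ω = Real.log (θ / (1 - θ))
        + Real.log ((v ω * (1 - θ)) / (1 - v ω * (1 - θ)))) :
    (∀ t : ℝ, t ≤ 0 →
        P {ω | ztilde ω ≤ t} = P {ω | z ω ≤ t} / ENNReal.ofReal (1 - θ)) ∧
    P {ω | ztilde ω ≤ 0} = 1 := by
  obtain ⟨hθ0, hθ1⟩ := hθ
  have h1θ : 0 < 1 - θ := by linarith
  have ha : 0 < θ / (1 - θ) := by positivity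
  have hc_le (t : ℝ) (ht : t ≤ 0) : Real.exp t / (θ / (1 - θ) + Real.exp t) ≤ 1 - θ :=
    exp_div_odds_add_exp_le ⟨hθ0, hθ1⟩ ht
  have hzcdf (t : ℝ) (ht : t ≤ 0) :
      P {ω | z ω ≤ t} = ENNReal.ofReal (Real.exp t / (θ / (1 - θ) + Real.exp t)) := by
    simp_rw [hz]
    exact measure_comp_le_eq_of_map_eq_uniform hu huni
      (g := fun x => Real.log (θ / (1 - θ)) + Real.log (x / (1 - x))) (by fun_prop)
      ((hc_le t ht).trans (by linarith)) fun x hx => log_add_log_div_one_sub_le_iff ha hx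
  have hztcdf (t : ℝ) (ht : t ≤ 0) : P {ω | ztilde ω ≤ t} =
      ENNReal.ofReal (Real.exp t / (θ / (1 - θ) + Real.exp t) / (1 - θ)) := by
    simp_rw [hzt]
    refine measure_comp_le_eq_of_map_eq_uniform hv hvni
      (g := fun x => Real.log (θ / (1 - θ)) + Real.log (x * (1 - θ) / (1 - x * (1 - θ))))
      (by fun_prop) ((div_le_one h1θ).2 (hc_le t ht)) fun x ⟨hx0, hx1⟩ => ?_
    rw [log_add_log_div_one_sub_le_iff ha ⟨by positivity, by nlinarith⟩, le_div_iff₀ h1θ]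
  refine ⟨fun t ht => ?_, ?_⟩
  · rw [hztcdf t ht, hzcdf t ht, ENNReal.ofReal_div_of_pos h1θ]
  · rw [hztcdf 0 le_rfl, Real.exp_zero, one_div_odds_add_one hθ1, div_self h1θ.ne',
      ENNReal.ofReal_one]

/-- Conditional reparameterization for a Bernoulli, case `b = 0`: with `v ∼ Uniform(0,1)`,
`v' = v(1−θ)` and `z̃ = log(θ/(1−θ)) + log(v'/(1−v'))`, the variable `z̃` has the
conditional law of `z` given `z ≤ 0`, where `z = log(θ/(1−θ)) + log(u/(1−u))`,
`u ∼ Uniform(0,1)`: for all `t ≤ 0`, `P(z̃ ≤ t) = P(z ≤ t)/(1−θ)`, and `P(z̃ ≤ 0) = 1`. -/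
theorem bernoulli_conditional_reparam_zero {Ω : Type*} [MeasurableSpace Ω]
    (P : Measure Ω) [IsProbabilityMeasure P]
    (θ : ℝ) (hθ : θ ∈ Set.Ioo (0 : ℝ) 1)
    (u v : Ω → ℝ) (hu : Measurable u) (hv : Measurable v)
    (huni : Measure.map u P = volume.restrict (Set.Ioo (0 : ℝ) 1))
    (hvni : Measure.map v P = volume.restrict (Set.Ioo (0 : ℝ) 1))
    (hind : IndepFun u v P)
    (z ztilde : Ω → ℝ)
    (hz : ∀ ω, z ω = Real.log (θ / (1 - θ)) + Real.log (u ω / (1 - u ω)))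
    (hzt : ∀ ω, ztilde ω = Real.log (θ / (1 - θ))
        + Real.log ((v ω * (1 - θ)) / (1 - v ω * (1 - θ)))) :
    (∀ t : ℝ, t ≤ 0 →
        P {ω | ztilde ω ≤ t} = P {ω | z ω ≤ t} / ENNReal.ofReal (1 - θ)) ∧
    P {ω | ztilde ω ≤ 0} = 1 :=
  bernoulli_conditional_reparam_zero_general P θ hθ u v hu hv huni hvni z ztilde hz hzt
end

section
/- Conditional reparameterization for Bernoulli, case b = 1: if v ∼ Uniform(0,1), v' = v·θ + (1−θ), and z̃ = log(θ/(1−θ)) + log(v'/(1−v')), then z̃ has the conditional distribution of z given z > 0, where z = log(θ/(1−θ)) + log(u/(1−u)) with u ∼ Uniform(0,1). Concretely, for all t > 0, P(z̃ > t) = P(z > t)/θ, and P(z̃ > 0) = 1. -/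
/-!
The logit `x ↦ log (x / (1 - x))` is the inverse of the sigmoid `σ` on `(0, 1)`, so
`t < c + logit x ↔ σ (t - c) < x`. With `c = log (θ / (1 - θ))`, the tail of `z` at `t` is
`1 - σ (t - c)`, while `v' = vθ + (1 - θ)` is uniform on `(1 - θ, 1)`, whose tail at
`s ≥ 1 - θ` is `(1 - s) / θ`. Since `σ (-c) = 1 - θ`, `s = σ (t - c)` qualifies for every `t ≥ 0`.
-/

open MeasureTheory ProbabilityTheory Real Set

namespace Real

lemma sigmoid_log_div_one_sub {x : ℝ} (hx : x ∈ Ioo (0 : ℝ) 1) :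
    sigmoid (log (x / (1 - x))) = x := by
  obtain ⟨hx0, hx1⟩ := hx
  have h1x : 0 < 1 - x := by linarith
  rw [sigmoid_def, exp_neg, exp_log (div_pos hx0 h1x), inv_div]
  field_simp
  ring

lemma lt_add_log_div_one_sub_iff {c t x : ℝ} (hx : x ∈ Ioo (0 : ℝ) 1) :
    t < c + log (x / (1 - x)) ↔ sigmoid (t - c) < x := by
  conv_rhs => rw [← sigmoid_log_div_one_sub hx]
  rw [sigmoid_lt_iff]
  constructor <;> intro h <;> linarith

lemma sigmoid_neg_log_div_one_sub {θ : ℝ} (hθ : θ ∈ Ioo (0 : ℝ) 1) :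
    sigmoid (-log (θ / (1 - θ))) = 1 - θ := by
  rw [sigmoid_neg, sigmoid_log_div_one_sub hθ]

end Real

section Uniform

variable {Ω : Type*} [MeasurableSpace Ω] {P : Measure Ω} {w : Ω → ℝ}

lemma ae_mem_Ioo_of_map_eq_uniform (hw : Measurable w)
    (hwP : P.map w = volume.restrict (Ioo (0 : ℝ) 1)) :
    ∀ᵐ ω ∂P, w ω ∈ Ioo (0 : ℝ) 1 :=
  ae_of_ae_map hw.aemeasurable (hwP ▸ ae_restrict_mem measurableSet_Ioo)

lemma measure_lt_of_map_eq_uniform (hw : Measurable w)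
    (hwP : P.map w = volume.restrict (Ioo (0 : ℝ) 1)) {a : ℝ} (ha : 0 ≤ a) :
    P {ω | a < w ω} = ENNReal.ofReal (1 - a) := by
  have hIoi : Ioi a ∩ Ioo 0 1 = Ioo a 1 := by
    ext x
    simp only [mem_inter_iff, mem_Ioi, mem_Ioo]
    constructor
    · rintro ⟨hax, -, hx1⟩
      exact ⟨hax, hx1⟩
    · rintro ⟨hax, hx1⟩
      exact ⟨hax, ha.trans_lt hax, hx1⟩
  change P (w ⁻¹' Ioi a) = _
  rw [← Measure.map_apply hw measurableSet_Ioi, hwP,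
    Measure.restrict_apply measurableSet_Ioi, hIoi, volume_Ioo]

lemma measure_lt_affine_of_map_eq_uniform (hw : Measurable w)
    (hwP : P.map w = volume.restrict (Ioo (0 : ℝ) 1)) {θ s : ℝ} (hθ : 0 < θ)
    (hs : 1 - θ ≤ s) :
    P {ω | s < w ω * θ + (1 - θ)} = ENNReal.ofReal ((1 - s) / θ) := by
  have hset : {ω | s < w ω * θ + (1 - θ)} = {ω | (s - (1 - θ)) / θ < w ω} := by
    ext ω
    simp only [mem_ofPred_eq, div_lt_iff₀ hθ]
    constructor <;> intro h <;> linarith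
  rw [hset, measure_lt_of_map_eq_uniform hw hwP (div_nonneg (by linarith) hθ.le)]
  congr 1
  field_simp
  ring

end Uniform

lemma measure_lt_add_log_div_one_sub_ae_eq {Ω : Type*} [MeasurableSpace Ω] {P : Measure Ω}
    {w : Ω → ℝ} (hw : ∀ᵐ ω ∂P, w ω ∈ Ioo (0 : ℝ) 1) (c t : ℝ) :
    P {ω | t < c + log (w ω / (1 - w ω))} = P {ω | sigmoid (t - c) < w ω} :=
  measure_congr <| Filter.eventuallyEq_set.mpr <|
    hw.mono fun _ hω ↦ lt_add_log_div_one_sub_iff hω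

theorem bernoulli_conditional_reparam_one_general {Ω : Type*} [MeasurableSpace Ω]
    (P : Measure Ω)
    (θ : ℝ) (hθ : θ ∈ Set.Ioo (0 : ℝ) 1)
    (u v : Ω → ℝ) (hu : Measurable u) (hv : Measurable v)
    (huni : Measure.map u P = volume.restrict (Set.Ioo (0 : ℝ) 1))
    (hvni : Measure.map v P = volume.restrict (Set.Ioo (0 : ℝ) 1))
    (z ztilde : Ω → ℝ)
    (hz : ∀ ω, z ω = Real.log (θ / (1 - θ)) + Real.log (u ω / (1 - u ω)))
    (hzt : ∀ ω, ztilde ω = Real.log (θ / (1 - θ))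
        + Real.log ((v ω * θ + (1 - θ)) / (1 - (v ω * θ + (1 - θ))))) :
    (∀ t : ℝ, 0 < t →
        P {ω | t < ztilde ω} = P {ω | t < z ω} / ENNReal.ofReal θ) ∧
    P {ω | 0 < ztilde ω} = 1 := by
  obtain ⟨hθ0, hθ1⟩ := hθ
  set c := log (θ / (1 - θ))
  have hv' : ∀ᵐ ω ∂P, v ω * θ + (1 - θ) ∈ Ioo (0 : ℝ) 1 :=
    (ae_mem_Ioo_of_map_eq_uniform hv hvni).mono fun ω ⟨h0, h1⟩ ↦ ⟨by nlinarith, by nlinarith⟩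
  have hz_tail (t : ℝ) : P {ω | t < z ω} = ENNReal.ofReal (1 - sigmoid (t - c)) := by
    simp only [hz, measure_lt_add_log_div_one_sub_ae_eq (ae_mem_Ioo_of_map_eq_uniform hu huni)]
    exact measure_lt_of_map_eq_uniform hu huni (sigmoid_nonneg _)
  have hzt_tail {t : ℝ} (ht : 0 ≤ t) :
      P {ω | t < ztilde ω} = ENNReal.ofReal ((1 - sigmoid (t - c)) / θ) := by
    have hs : 1 - θ ≤ sigmoid (t - c) := by
      rw [← sigmoid_neg_log_div_one_sub ⟨hθ0, hθ1⟩]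
      exact sigmoid_le (by linarith)
    simp only [hzt, measure_lt_add_log_div_one_sub_ae_eq hv']
    exact measure_lt_affine_of_map_eq_uniform hv hvni hθ0 hs
  refine ⟨fun t ht ↦ ?_, ?_⟩
  · rw [hzt_tail ht.le, hz_tail, ENNReal.ofReal_div_of_pos hθ0]
  · rw [hzt_tail le_rfl, zero_sub, sigmoid_neg_log_div_one_sub ⟨hθ0, hθ1⟩, sub_sub_cancel,
      div_self hθ0.ne', ENNReal.ofReal_one]

/-- Conditional reparameterization for a Bernoulli, case `b = 1`: with `v ∼ Uniform(0,1)`,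
`v' = vθ + (1−θ)` and `z̃ = log(θ/(1−θ)) + log(v'/(1−v'))`, the variable `z̃` has the
conditional law of `z` given `z > 0`, where `z = log(θ/(1−θ)) + log(u/(1−u))`,
`u ∼ Uniform(0,1)`: for all `t > 0`, `P(z̃ > t) = P(z > t)/θ`, and `P(z̃ > 0) = 1`. -/
theorem bernoulli_conditional_reparam_one {Ω : Type*} [MeasurableSpace Ω]
    (P : Measure Ω) [IsProbabilityMeasure P]
    (θ : ℝ) (hθ : θ ∈ Set.Ioo (0 : ℝ) 1)
    (u v : Ω → ℝ) (hu : Measurable u) (hv : Measurable v)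
    (huni : Measure.map u P = volume.restrict (Set.Ioo (0 : ℝ) 1))
    (hvni : Measure.map v P = volume.restrict (Set.Ioo (0 : ℝ) 1))
    (hind : IndepFun u v P)
    (z ztilde : Ω → ℝ)
    (hz : ∀ ω, z ω = Real.log (θ / (1 - θ)) + Real.log (u ω / (1 - u ω)))
    (hzt : ∀ ω, ztilde ω = Real.log (θ / (1 - θ))
        + Real.log ((v ω * θ + (1 - θ)) / (1 - (v ω * θ + (1 - θ))))) :
    (∀ t : ℝ, 0 < t →
        P {ω | t < ztilde ω} = P {ω | t < z ω} / ENNReal.ofReal θ) ∧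
    P {ω | 0 < ztilde ω} = 1 :=
  bernoulli_conditional_reparam_one_general P θ hθ u v hu hv huni hvni z ztilde hz hzt
end
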